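/- Let A₀, A₁ and B be n×n complex matrices. The following are equivalent: (i) there exist d₀, d₁ ∈ ℂ with |d₀|² + |d₁|² = 1 such that A₀ = d₀ • B and A₁ = d₁ • B; (ii) for every positive semidefinite n×n complex matrix ρ, A₀·ρ·A₀ᴴ + A₁·ρ·A₁ᴴ = B·ρ·Bᴴ. -/

import Mathlib

/-!
Both sides of (ii) are linear in `ρ`, and positive semidefinite matrices span all complex
matrices, so (ii) holds for every `ρ`. At the matrix units `ρ = single j l 1` it says
`x xᴴ + y yᴴ = z zᴴ` for `x = vec A₀`, `y = vec A₁`, `z = vec B`. Such an identity forces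
`x = d₀ • z` and `y = d₁ • z` with `‖d₀‖² + ‖d₁‖² = 1`: read `d₀, d₁` off a coordinate `b` with
`z b ≠ 0`; then `‖x a - d₀ z a‖² + ‖y a - d₁ z a‖² = 0` for every `a`.
-/

open Matrix ComplexOrder

section VecMulVec

variable {ι 𝕜 : Type*} [RCLike 𝕜]

theorem eq_zero_and_eq_zero_of_mul_star_add_mul_star_eq_zero {a b : 𝕜}
    (h : a * star a + b * star b = 0) : a = 0 ∧ b = 0 := by
  rw [add_eq_zero_iff_of_nonneg (mul_star_self_nonneg a) (mul_star_self_nonneg b)] at h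
  exact ⟨(CStarRing.mul_star_self_eq_zero_iff a).1 h.1,
    (CStarRing.mul_star_self_eq_zero_iff b).1 h.2⟩

theorem exists_smul_of_vecMulVec_add_vecMulVec_eq {x y z : ι → 𝕜}
    (h : vecMulVec x (star x) + vecMulVec y (star y) = vecMulVec z (star z)) :
    ∃ d₀ d₁ : 𝕜, ‖d₀‖ ^ 2 + ‖d₁‖ ^ 2 = 1 ∧ x = d₀ • z ∧ y = d₁ • z := by
  have hxyz (a b : ι) : x a * star (x b) + y a * star (y b) = z a * star (z b) := by
    simpa only [Matrix.add_apply, vecMulVec_apply, Pi.star_apply] using congr_fun₂ h a b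
  by_cases hz : z = 0
  · have hxy (a : ι) : x a = 0 ∧ y a = 0 :=
      eq_zero_and_eq_zero_of_mul_star_add_mul_star_eq_zero (by simpa [hz] using hxyz a a)
    exact ⟨1, 0, by simp, funext fun a => by simp [hz, (hxy a).1],
      funext fun a => by simp [(hxy a).2]⟩
  obtain ⟨b, hb⟩ : ∃ b, z b ≠ 0 := Function.ne_iff.1 hz
  have hb' : star (z b) ≠ 0 := star_ne_zero.2 hb
  set d₀ := x b / z b
  set d₁ := y b / z b
  have hd : d₀ * star d₀ + d₁ * star d₁ = 1 := by
    simp only [d₀, d₁, star_div₀]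
    field_simp
    linear_combination hxyz b b
  have hproj (a : ι) : x a * star d₀ + y a * star d₁ = z a := by
    simp only [d₀, d₁, star_div₀]
    field_simp
    linear_combination hxyz a b
  have hres (a : ι) : x a - d₀ * z a = 0 ∧ y a - d₁ * z a = 0 := by
    refine eq_zero_and_eq_zero_of_mul_star_add_mul_star_eq_zero ?_
    have hproj' := congr_arg star (hproj a)
    simp only [star_add, star_mul', star_star] at hproj'
    simp only [star_sub, star_mul']
    linear_combination hxyz a a - star (z a) * hproj a - z a * hproj' + z a * star (z a) * hd
  refine ⟨d₀, d₁, ?_, funext fun a => ?_, funext fun a => ?_⟩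
  · simp only [RCLike.star_def, RCLike.mul_conj] at hd
    exact_mod_cast hd
  · simpa [sub_eq_zero] using (hres a).1
  · simpa [sub_eq_zero] using (hres a).2

end VecMulVec

theorem Matrix.mul_single_mul_conjTranspose_apply {m n α : Type*} [Fintype n] [DecidableEq n]
    [Semiring α] [StarRing α] (M : Matrix m n α) (i k : m) (j l : n) :
    (M * single j l (1 : α) * Mᴴ) i k = M i j * star (M k l) := by
  rw [single_eq_single_vecMulVec_single, mul_vecMulVec, vecMulVec_mul, mulVec_single_one,
    single_one_vecMul]
  rfl

theorem Matrix.smul_mul_mul_conjTranspose_smul {m n 𝕜 : Type*} [Fintype n] [RCLike 𝕜] (d : 𝕜)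
    (B : Matrix m n 𝕜) (ρ : Matrix n n 𝕜) :
    d • B * ρ * (d • B)ᴴ = (‖d‖ ^ 2 : ℝ) • (B * ρ * Bᴴ) := by
  rw [conjTranspose_smul, smul_mul, smul_mul, Matrix.mul_smul, smul_smul, RCLike.star_def,
    RCLike.mul_conj, ← RCLike.ofReal_pow, RCLike.real_smul_eq_coe_smul (K := 𝕜)]

open scoped MatrixOrder in
theorem Matrix.span_posSemidef {n : Type*} [Fintype n] [DecidableEq n] :
    Submodule.span ℂ {ρ : Matrix n n ℂ | ρ.PosSemidef} = ⊤ := by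
  have hset : {ρ : Matrix n n ℂ | ρ.PosSemidef} = {ρ | 0 ≤ ρ} :=
    Set.ext fun _ => nonneg_iff_posSemidef.symm
  rw [hset]
  exact CStarAlgebra.span_nonneg

theorem two_kraus_eq_single_iff {n : ℕ} (A₀ A₁ B : Matrix (Fin n) (Fin n) ℂ) :
    (∃ d₀ d₁ : ℂ, ‖d₀‖ ^ 2 + ‖d₁‖ ^ 2 = 1 ∧
        A₀ = d₀ • B ∧ A₁ = d₁ • B) ↔
      (∀ ρ : Matrix (Fin n) (Fin n) ℂ, ρ.PosSemidef →
        A₀ * ρ * A₀ᴴ + A₁ * ρ * A₁ᴴ = B * ρ * Bᴴ) := by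
  constructor
  · rintro ⟨d₀, d₁, hd, rfl, rfl⟩ ρ -
    rw [smul_mul_mul_conjTranspose_smul, smul_mul_mul_conjTranspose_smul, ← add_smul, hd,
      one_smul]
  · intro h
    have hmaps : LinearMap.mulLeftRight ℂ (A₀, A₀ᴴ) + LinearMap.mulLeftRight ℂ (A₁, A₁ᴴ) =
        LinearMap.mulLeftRight ℂ (B, Bᴴ) :=
      LinearMap.ext_on span_posSemidef h
    have hvec : vecMulVec (vec A₀) (star (vec A₀)) + vecMulVec (vec A₁) (star (vec A₁)) =
        vecMulVec (vec B) (star (vec B)) := by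
      ext ⟨j, i⟩ ⟨l, k⟩
      have hjl := congr_fun₂ (LinearMap.congr_fun hmaps (single j l 1)) i k
      simp only [LinearMap.add_apply, LinearMap.mulLeftRight_apply, Matrix.add_apply,
        mul_single_mul_conjTranspose_apply] at hjl
      exact hjl
    obtain ⟨d₀, d₁, hd, h₀, h₁⟩ := exists_smul_of_vecMulVec_add_vecMulVec_eq hvec
    exact ⟨d₀, d₁, hd, vec_inj.1 (h₀.trans (vec_smul d₀ B).symm),
      vec_inj.1 (h₁.trans (vec_smul d₁ B).symm)⟩
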